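/- arXiv:2312.10668 — 5 statements merged into one kernel-verified Lean document; each statement's English description precedes it below -/
import Mathlib

section
/- Let b ≥ 2, let I = (a/b^r, (a+1)/b^r] be a b-adic interval with 0 ≤ a < b^r, and let h_I be the associated b-adic Haar function (equal to -1 on the first b-adic child subinterval of length 1/b^{r+1}, +1 on the second, and 0 elsewhere). If M = b^{ν+τ} with ν ≥ r+1 and τ ≥ 1 integers, then the sum over j = 1, ..., M of (j/M)·h_I(j/M) equals (M/b²)·|I|² = M/b^{2r+2}. -/
/-! With `M = b ^ (r + 1) * K` and `A = a * b * K`, the endpoints of the two children of `I`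
are the grid points `A / M`, `(A + K) / M`, `(A + 2K) / M`, so the sum is `∑_{A+K < j ≤ A+2K} j/M - ∑_{A < j ≤ A+K} j/M`.
Pairing `j` with `j + K` makes this `K · K / M = M / b ^ (2r + 2)`. -/

open Finset

lemma div_mem_Ioc_div_iff {M : ℕ} (hM : 0 < M) (m n j : ℕ) :
    (j : ℝ) / M ∈ Set.Ioc ((m : ℝ) / M) ((n : ℝ) / M) ↔ j ∈ Ioc m n := by
  have hM' : (0 : ℝ) < M := by exact_mod_cast hM
  simp only [Set.mem_Ioc, div_lt_div_iff_of_pos_right hM', div_le_div_iff_of_pos_right hM',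
    Nat.cast_lt, Nat.cast_le, mem_Ioc]

lemma sum_grid_mul_indicator_Ioc {M : ℕ} (hM : 0 < M) {m n : ℕ} (hn : n ≤ M) (f : ℝ → ℝ) :
    ∑ j ∈ Icc 1 M, f ((j : ℝ) / M) *
        (Set.Ioc ((m : ℝ) / M) ((n : ℝ) / M)).indicator (fun _ => (1 : ℝ)) ((j : ℝ) / M)
      = ∑ j ∈ Ioc m n, f ((j : ℝ) / M) := by
  have hsub : Ioc m n ⊆ Icc 1 M := fun j hj => by
    rw [mem_Ioc] at hj; rw [mem_Icc]; omega
  simp only [Set.indicator_apply, div_mem_Ioc_div_iff hM, mul_ite, mul_one, mul_zero]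
  rw [sum_ite_mem, inter_eq_right.mpr hsub]

lemma sum_Ioc_add_sub_sum_Ioc (n K : ℕ) :
    ∑ j ∈ Ioc (n + K) (n + K + K), (j : ℝ) - ∑ j ∈ Ioc n (n + K), (j : ℝ) = K ^ 2 := by
  rw [← map_add_right_Ioc, sum_map, ← sum_sub_distrib]
  simp [sq]

lemma div_pow_add_div_pow_succ_eq_div {b K : ℕ} (hb : 0 < b) (hK : 0 < K) (r a c : ℕ) :
    (a : ℝ) / b ^ r + c / b ^ (r + 1) = ((a * b * K + c * K : ℕ) : ℝ) / (b ^ (r + 1) * K : ℕ) := by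
  have : (0 : ℝ) < b := by exact_mod_cast hb
  have : (0 : ℝ) < K := by exact_mod_cast hK
  push_cast
  field_simp
  ring

theorem stmt1_general (b r ν τ a M : ℕ) (hb : 2 ≤ b) (hν : r + 1 ≤ ν)
    (ha : a < b ^ r) (hM : M = b ^ (ν + τ)) :
    ∑ j ∈ Finset.Icc 1 M,
      ((j : ℝ) / M) *
      ((Set.Ioc ((a : ℝ) / b ^ r + 1 / b ^ (r + 1)) ((a : ℝ) / b ^ r + 2 / b ^ (r + 1))).indicator
          (fun _ => (1 : ℝ)) ((j : ℝ) / M)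
        - (Set.Ioc ((a : ℝ) / b ^ r) ((a : ℝ) / b ^ r + 1 / b ^ (r + 1))).indicator
          (fun _ => (1 : ℝ)) ((j : ℝ) / M))
    = (M : ℝ) / b ^ (2 * r + 2) := by
  obtain ⟨e, he⟩ : ∃ e, ν + τ = r + 1 + e := ⟨ν + τ - (r + 1), by omega⟩
  set K := b ^ e
  have hb0 : 0 < b := by omega
  have hK : 0 < K := by positivity
  have hMK : M = b ^ (r + 1) * K := by rw [hM, he, pow_add]
  have hMpos : 0 < M := hMK ▸ by positivity
  have hfit : a * b * K + K + K ≤ M := by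
    have : a * b + 2 ≤ b ^ r * b := by nlinarith
    rw [hMK, pow_succ]; nlinarith
  have h0 := div_pow_add_div_pow_succ_eq_div hb0 hK r a 0
  have h1 := div_pow_add_div_pow_succ_eq_div hb0 hK r a 1
  have h2 := div_pow_add_div_pow_succ_eq_div hb0 hK r a 2
  simp only [Nat.cast_zero, zero_div, add_zero, zero_mul, Nat.cast_one, Nat.cast_ofNat, one_mul,
    ← hMK] at h0 h1 h2
  rw [h1, h2, h0, show a * b * K + 2 * K = a * b * K + K + K by ring]
  simp only [mul_sub, sum_sub_distrib]
  rw [sum_grid_mul_indicator_Ioc hMpos hfit (fun x => x),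
    sum_grid_mul_indicator_Ioc hMpos (by omega) (fun x => x)]
  simp only [← sum_div, ← sub_div, sum_Ioc_add_sub_sum_Ioc]
  rw [hMK]
  push_cast
  field_simp
  ring

/-- Weighted sum of the `b`-adic Haar function `h_I` over the grid `{j/M}`:
`∑_{j=1}^M (j/M)·h_I(j/M) = (M/b²)·|I|² = M/b^(2r+2)`, for `M = b^(ν+τ)`,
`ν ≥ r+1`, `τ ≥ 1`. -/
theorem stmt1 (b r ν τ a M : ℕ) (hb : 2 ≤ b) (hν : r + 1 ≤ ν) (hτ : 1 ≤ τ)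
    (ha : a < b ^ r) (hM : M = b ^ (ν + τ)) :
    ∑ j ∈ Finset.Icc 1 M,
      ((j : ℝ) / M) *
      ((Set.Ioc ((a : ℝ) / b ^ r + 1 / b ^ (r + 1)) ((a : ℝ) / b ^ r + 2 / b ^ (r + 1))).indicator
          (fun _ => (1 : ℝ)) ((j : ℝ) / M)
        - (Set.Ioc ((a : ℝ) / b ^ r) ((a : ℝ) / b ^ r + 1 / b ^ (r + 1))).indicator
          (fun _ => (1 : ℝ)) ((j : ℝ) / M))
    = (M : ℝ) / b ^ (2 * r + 2) :=
  stmt1_general b r ν τ a M hb hν ha hM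
end

section
/- Let M be an even positive integer, 0 < ε < 1/2, and let k be an integer with 0 < |k| ≤ εM. Then the number of integers r with 0 ≤ r ≤ M/2 - 1 satisfying 1 - cos(4πkr/M) ≤ 1 - cos(2πε) is at most 2εM. -/
/-!
Write `|k| = a d` and `M / 2 = n d` with `a` and `n` coprime. Then
`cos (4πkr/M) = cos (2π (a r mod n) / n)`, which is `n`-periodic in `r`, and on each of the `d`
blocks of `n` consecutive values of `r` the map `r ↦ a r mod n` is injective. So the count is
at most `d` times the number of `j < n` with `cos (2πj/n) ≥ cos (2πε)`, i.e. with `j / n`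
within `ε` of `0` or `1`; there are at most `2εn + 1` of those. This gives the bound
`2ε (M / 2) + d ≤ 2εM`, since `d ≤ |k| ≤ εM`.
-/

open Real Finset

lemma Real.cos_two_pi_mul_lt_cos_two_pi_mul {ε x : ℝ} (hε : 0 ≤ ε) (h₁ : ε < x)
    (h₂ : x < 1 - ε) :
    cos (2 * π * x) < cos (2 * π * ε) := by
  rcases le_total x (1 / 2) with hx | hx
  · exact cos_lt_cos_of_nonneg_of_le_pi (by positivity) (by nlinarith [pi_pos])
      (by nlinarith [pi_pos])
  · have hsymm : cos (2 * π * x) = cos (2 * π * (1 - x)) := by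
      rw [show 2 * π * (1 - x) = 2 * π - 2 * π * x by ring, cos_two_pi_sub]
    rw [hsymm]
    exact cos_lt_cos_of_nonneg_of_le_pi (by positivity) (by nlinarith [pi_pos])
      (by nlinarith [pi_pos])

lemma Real.cos_two_pi_mul_div_mod (a b : ℕ) :
    cos (2 * π * (a % b : ℕ) / b) = cos (2 * π * a / b) := by
  rcases b.eq_zero_or_pos with rfl | hb
  · simp
  have hdiv : 2 * π * a / b = 2 * π * (a % b : ℕ) / b + (a / b : ℕ) * (2 * π) := by
    conv_lhs => rw [← Nat.mod_add_div a b]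
    push_cast
    field_simp
  rw [hdiv, cos_add_nat_mul_two_pi]

lemma Nat.count_le_or_sub_le (n : ℕ) {x : ℝ} (hx : 0 ≤ x) :
    (Nat.count (fun j : ℕ => (j : ℝ) ≤ x ∨ n - x ≤ j) n : ℝ) ≤ 2 * x + 1 := by
  have hlow : #((range n).filter fun j : ℕ => (j : ℝ) ≤ x) ≤ ⌊x⌋₊ + 1 := by
    calc #((range n).filter fun j : ℕ => (j : ℝ) ≤ x) ≤ #(range (⌊x⌋₊ + 1)) :=
          card_le_card fun j hj =>
            mem_range.2 (Nat.lt_succ_of_le (Nat.le_floor (mem_filter.1 hj).2))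
      _ = ⌊x⌋₊ + 1 := card_range _
  have hhigh : #((range n).filter fun j : ℕ => n - x ≤ (j : ℝ)) ≤ n - ⌈n - x⌉₊ := by
    calc #((range n).filter fun j : ℕ => n - x ≤ (j : ℝ)) ≤ #(Ico ⌈n - x⌉₊ n) := by
          refine card_le_card fun j hj => ?_
          rw [mem_filter, mem_range] at hj
          exact mem_Ico.2 ⟨Nat.ceil_le.2 hj.2, hj.1⟩
      _ = n - ⌈n - x⌉₊ := Nat.card_Ico _ _
  have hhigh' : ((n - ⌈n - x⌉₊ : ℕ) : ℝ) ≤ x := by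
    rcases le_total ⌈n - x⌉₊ n with h | h
    · rw [Nat.cast_sub h]
      linarith [Nat.le_ceil ((n : ℝ) - x)]
    · simpa [Nat.sub_eq_zero_of_le h] using hx
  rw [Nat.count_eq_card_filter_range, filter_or]
  calc (#(((range n).filter fun j : ℕ => (j : ℝ) ≤ x) ∪
          (range n).filter fun j : ℕ => n - x ≤ (j : ℝ)) : ℝ)
      ≤ #((range n).filter fun j : ℕ => (j : ℝ) ≤ x) +
          #((range n).filter fun j : ℕ => n - x ≤ (j : ℝ)) := by
        exact_mod_cast card_union_le _ _
    _ ≤ (⌊x⌋₊ + 1 : ℕ) + (n - ⌈n - x⌉₊ : ℕ) := by gcongr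
    _ ≤ 2 * x + 1 := by push_cast; linarith [Nat.floor_le hx]

lemma Nat.count_cos_two_pi_mul_div_le (n : ℕ) {ε : ℝ} (hε : 0 ≤ ε) :
    (Nat.count (fun j : ℕ => cos (2 * π * ε) ≤ cos (2 * π * j / n)) n : ℝ) ≤
      2 * ε * n + 1 := by
  have himp : ∀ j < n, cos (2 * π * ε) ≤ cos (2 * π * j / n) →
      (j : ℝ) ≤ ε * n ∨ n - ε * n ≤ j := by
    intro j hj hcos
    have hn : (0 : ℝ) < n := by exact_mod_cast (Nat.zero_le j).trans_lt hj
    by_contra! h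
    rw [mul_div_assoc] at hcos
    refine (cos_two_pi_mul_lt_cos_two_pi_mul (x := j / n) hε ?_ ?_).not_ge hcos
    · rw [lt_div_iff₀ hn]; linarith
    · rw [div_lt_iff₀ hn]; linarith
  calc (Nat.count (fun j : ℕ => cos (2 * π * ε) ≤ cos (2 * π * j / n)) n : ℝ)
      ≤ Nat.count (fun j : ℕ => (j : ℝ) ≤ ε * n ∨ n - ε * n ≤ j) n := by
        exact_mod_cast Nat.count_mono_left himp
    _ ≤ 2 * (ε * n) + 1 := Nat.count_le_or_sub_le n (by positivity)
    _ = 2 * ε * n + 1 := by ring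

lemma Nat.count_mul_of_periodic {p : ℕ → Prop} [DecidablePred p] {n : ℕ}
    (hp : Function.Periodic p n) (m : ℕ) : Nat.count p (m * n) = m * Nat.count p n := by
  induction m with
  | zero => simp
  | succ m ih =>
    rw [add_mul, Nat.count_add, ih, one_mul, add_mul, one_mul]
    congr 2
    funext j
    rw [add_comm]
    exact hp.nat_mul m j

lemma Nat.count_comp_mul_mod_le {a n : ℕ} (ha : a.Coprime n) (P : ℕ → Prop)
    [DecidablePred P] :
    Nat.count (fun r => P (a * r % n)) n ≤ Nat.count P n := by
  simp only [Nat.count_eq_card_filter_range]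
  refine card_le_card_of_injOn (fun r => a * r % n) (fun r hr => ?_) (fun r hr s hs hrs => ?_)
  · simp only [coe_filter, mem_range, Set.mem_ofPred_eq] at hr ⊢
    exact ⟨Nat.mod_lt _ ((Nat.zero_le r).trans_lt hr.1), hr.2⟩
  · simp only [coe_filter, mem_range, Set.mem_ofPred_eq] at hr hs
    exact Nat.ModEq.eq_of_lt_of_lt (Nat.ModEq.cancel_left_of_coprime
      (Nat.gcd_comm a n ▸ ha) hrs) hr.1 hs.1

lemma Nat.count_comp_mul_mod_mul_le {a n : ℕ} (ha : a.Coprime n) (P : ℕ → Prop)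
    [DecidablePred P] (m : ℕ) :
    Nat.count (fun r => P (a * r % n)) (m * n) ≤ m * Nat.count P n := by
  have hper : Function.Periodic (fun r => P (a * r % n)) n := fun r => by
    simp [mul_add]
  rw [Nat.count_mul_of_periodic hper]
  exact Nat.mul_le_mul_left m (Nat.count_comp_mul_mod_le ha P)

lemma Real.cos_two_pi_int_mul_div {k : ℤ} {a d : ℕ} (hk : k.natAbs = a * d) (hd : d ≠ 0)
    (n r : ℕ) : cos (2 * π * k * r / (n * d)) = cos (2 * π * (a * r % n : ℕ) / n) := by
  rcases n.eq_zero_or_pos with rfl | hn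
  · simp
  rw [cos_two_pi_mul_div_mod]
  rcases Int.natAbs_eq k with h | h <;> rw [h, hk] <;> push_cast
  · congr 1; field_simp
  · rw [← cos_neg]; congr 1; field_simp

theorem stmt9_general (M : ℕ) (hM : 0 < M) (hMe : Even M) (ε : ℝ) (hε1 : 0 < ε)
    (k : ℤ) (hk0 : k ≠ 0) (hk : |(k : ℝ)| ≤ ε * M) :
    (((Finset.range (M / 2)).filter fun r : ℕ =>
        1 - Real.cos (4 * Real.pi * k * (r : ℝ) / M) ≤ 1 - Real.cos (2 * Real.pi * ε)).card : ℝ)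
      ≤ 2 * ε * M := by
  obtain ⟨N, rfl⟩ := hMe
  obtain ⟨d, a, n, hd, hcop, hka, hNn⟩ :=
    Nat.exists_coprime' (Nat.gcd_pos_of_pos_right k.natAbs (by omega : 0 < N))
  let P : ℕ → Prop := fun j => cos (2 * π * ε) ≤ cos (2 * π * j / n)
  have hcard : #((range ((N + N) / 2)).filter fun r : ℕ =>
        1 - cos (4 * π * k * (r : ℝ) / ↑(N + N)) ≤ 1 - cos (2 * π * ε)) =
      Nat.count (fun r => P (a * r % n)) (d * n) := by
    have hhalf : (N + N) / 2 = d * n := by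
      rw [← two_mul, Nat.mul_div_cancel_left _ two_pos, hNn, mul_comm]
    rw [Nat.count_eq_card_filter_range, hhalf]
    refine congrArg card (filter_congr fun r _ => ?_)
    dsimp only [P]
    rw [sub_le_sub_iff_left, ← cos_two_pi_int_mul_div hka hd.ne', hNn]
    push_cast
    ring_nf
  have hdk : (d : ℝ) ≤ ε * ↑(N + N) := by
    have : d ≤ k.natAbs := Nat.le_of_dvd (Int.natAbs_pos.2 hk0) ⟨a, by rw [hka, mul_comm]⟩
    calc (d : ℝ) ≤ k.natAbs := by exact_mod_cast this
      _ = |(k : ℝ)| := by rw [Nat.cast_natAbs, Int.cast_abs]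
      _ ≤ _ := hk
  rw [hcard]
  calc (Nat.count _ (d * n) : ℝ) ≤ d * Nat.count P n := by
        exact_mod_cast Nat.count_comp_mul_mod_mul_le hcop P d
    _ ≤ d * (2 * ε * n + 1) := by gcongr; exact Nat.count_cos_two_pi_mul_div_le n hε1.le
    _ ≤ 2 * ε * ↑(N + N) := by
        rw [hNn] at hdk ⊢
        push_cast at hdk ⊢
        linarith

/-- Counting lemma: for `0 < |k| ≤ εM`, at most `2εM` of the integers
`r ∈ {0,…,M/2-1}` satisfy `1 - cos(4πkr/M) ≤ 1 - cos(2πε)`. -/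
theorem stmt9 (M : ℕ) (hM : 0 < M) (hMe : Even M) (ε : ℝ) (hε1 : 0 < ε) (hε2 : ε < 1 / 2)
    (k : ℤ) (hk0 : k ≠ 0) (hk : |(k : ℝ)| ≤ ε * M) :
    (((Finset.range (M / 2)).filter fun r : ℕ =>
        1 - Real.cos (4 * Real.pi * k * (r : ℝ) / M) ≤ 1 - Real.cos (2 * Real.pi * ε)).card : ℝ)
      ≤ 2 * ε * M :=
  stmt9_general M hM hMe ε hε1 k hk0 hk
end

section
/- Let M be an even positive integer, h ≥ 1, 0 < ε < 1/(8h), and k = (k₁,...,k_h) ∈ J_M^h ∩ [-εM, εM]^h with k₁⋯k_h ≠ 0. Then Σ_{r=⌊M/4⌋}^{M/2-1} Π_{u=1}^h (1 - cos(4πk_u r/M)) ≥ (M/4)·(1 - 8εh)·(1 - cos(2πε))^h. -/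
/-!
Write `M = 2N`, so that the angles are `2π k r / N`. A factor `1 - cos (2π k r / N)` is below
`1 - cos (2π ε)` only if the balanced residue `s` of `k r` modulo `N` has `|s| < εN`. Such an
`s` is a multiple of `g = gcd(N, k)`, and `r < N` is determined by `s` together with
`r / (N / g) < g`; hence at most `g (2εN / g + 1) ≤ 2εN + |k| ≤ 2εM` values of `r` are bad
for a given factor. Discarding the bad `r` of all `h` factors leaves at least `M/4 - 2εhM` values of
`r`, each contributing at least `(1 - cos (2π ε))^h`.
-/

open Finset Real

theorem Finset.card_le_card_filter_forall_add_sum {ι α : Type*} [Fintype ι] (s : Finset α)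
    (p : ι → α → Prop) [∀ i, DecidablePred (p i)] :
    #s ≤ #{a ∈ s | ∀ i, p i a} + ∑ i, #{a ∈ s | ¬ p i a} := by
  classical
  calc #s ≤ #({a ∈ s | ∀ i, p i a} ∪ univ.biUnion fun i ↦ {a ∈ s | ¬ p i a}) := by
        refine card_le_card fun a ha ↦ ?_
        by_cases hp : ∀ i, p i a
        · exact mem_union_left _ (mem_filter.2 ⟨ha, hp⟩)
        · obtain ⟨i, hi⟩ := not_forall.1 hp
          exact mem_union_right _ (mem_biUnion.2 ⟨i, mem_univ i, mem_filter.2 ⟨ha, hi⟩⟩)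
    _ ≤ _ := (card_union_le _ _).trans (Nat.add_le_add_left card_biUnion_le _)

theorem Finset.card_sub_mul_pow_le_sum_prod {ι α : Type*} [Fintype ι] (s : Finset α)
    (f : ι → α → ℝ) (hf : ∀ i, ∀ a ∈ s, 0 ≤ f i a) {b c : ℝ} (hc : 0 ≤ c)
    (hb : ∀ i, (#{a ∈ s | f i a < c} : ℝ) ≤ b) :
    (#s - Fintype.card ι * b) * c ^ Fintype.card ι ≤ ∑ a ∈ s, ∏ i, f i a := by
  classical
  set G := {a ∈ s | ∀ i, c ≤ f i a}
  have hG : (#s : ℝ) - Fintype.card ι * b ≤ #G := by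
    have hcover := s.card_le_card_filter_forall_add_sum fun i a ↦ c ≤ f i a
    simp only [not_le] at hcover
    have hsum : ∑ i, (#{a ∈ s | f i a < c} : ℝ) ≤ Fintype.card ι * b := by
      simpa using sum_le_sum fun i (_ : i ∈ univ) ↦ hb i
    have : (#s : ℝ) ≤ #G + ∑ i, (#{a ∈ s | f i a < c} : ℝ) := by exact_mod_cast hcover
    linarith
  calc (#s - Fintype.card ι * b) * c ^ Fintype.card ι
      ≤ #G * c ^ Fintype.card ι := mul_le_mul_of_nonneg_right hG (pow_nonneg hc _)
    _ = ∑ _a ∈ G, ∏ _i : ι, c := by simp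
    _ ≤ ∑ a ∈ G, ∏ i, f i a := sum_le_sum fun a ha ↦
        prod_le_prod (fun _ _ ↦ hc) fun i _ ↦ (mem_filter.1 ha).2 i
    _ ≤ ∑ a ∈ s, ∏ i, f i a := sum_le_sum_of_subset_of_nonneg (filter_subset _ _)
        fun a ha _ ↦ prod_nonneg fun i _ ↦ hf i a ha

theorem eq_of_bmod_mul_eq_of_div_eq {N : ℕ} (hN : 0 < N) (k : ℤ) {r₁ r₂ : ℕ}
    (hdiv : r₁ / (N / Int.gcd N k) = r₂ / (N / Int.gcd N k))
    (hbmod : (k * r₁).bmod N = (k * r₂).bmod N) : r₁ = r₂ := by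
  have hmod : k * r₁ ≡ k * r₂ [ZMOD N] := by
    rw [Int.ModEq, ← Int.bmod_emod, hbmod, Int.bmod_emod]
  have hcancel := Int.ModEq.cancel_left_div_gcd (by exact_mod_cast hN) hmod
  rw [← Int.natCast_div, Int.natCast_modEq_iff] at hcancel
  rw [← Nat.div_add_mod r₁ (N / Int.gcd N k), ← Nat.div_add_mod r₂ (N / Int.gcd N k), hdiv,
    hcancel]

theorem card_filter_abs_bmod_mul_lt_le {N : ℕ} (hN : 0 < N) (k : ℤ) {x : ℝ} (hx : 0 ≤ x) :
    (#{r ∈ range N | |((k * (r : ℕ)).bmod N : ℝ)| < x} : ℝ) ≤ 2 * x + Int.gcd N k := by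
  set g := Int.gcd N k
  set n := N / g
  set F := ⌊x / g⌋
  have hg : 0 < g := Int.gcd_pos_of_ne_zero_left _ (by exact_mod_cast hN.ne')
  have hgN : g ∣ N := by exact_mod_cast Int.gcd_dvd_left (N : ℤ) k
  have hNgn : g * n = N := Nat.mul_div_cancel' hgN
  have hgR : (0 : ℝ) < g := by exact_mod_cast hg
  have hgdvd (r : ℕ) : (g : ℤ) ∣ (k * r).bmod N := by
    simpa using dvd_sub ((Int.gcd_dvd_right _ _).mul_right (r : ℤ))
      ((Int.natCast_dvd_natCast.2 hgN).trans (Int.dvd_self_sub_bmod (x := k * r)))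
  have hcard := card_le_card_of_injOn (s := {r ∈ range N | |((k * (r : ℕ)).bmod N : ℝ)| < x})
    (t := range g ×ˢ Icc (-F) F) (fun r ↦ (r / n, (k * r).bmod N / g)) ?mapsTo ?injOn
  case mapsTo =>
    intro r hr
    simp only [coe_filter, mem_range, Set.mem_ofPred_eq] at hr
    obtain ⟨j, hj⟩ := hgdvd r
    have hj' : |(j : ℝ)| < x / g := by
      rw [lt_div_iff₀ hgR, ← abs_of_pos hgR, ← abs_mul, mul_comm]
      exact_mod_cast hj ▸ hr.2
    simp only [coe_product, coe_range, coe_Icc, Set.mem_prod, Set.mem_Iio, Set.mem_Icc, hj,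
      Int.mul_ediv_cancel_left _ (Int.natCast_ne_zero.2 hg.ne')]
    refine ⟨Nat.div_lt_of_lt_mul (by rw [mul_comm, hNgn]; exact hr.1), ?_,
      Int.le_floor.2 (abs_lt.1 hj').2.le⟩
    rw [neg_le, Int.le_floor, Int.cast_neg]
    linarith [(abs_lt.1 hj').1]
  case injOn =>
    intro r₁ _ r₂ _ h
    simp only [Prod.mk.injEq, Int.ediv_left_inj (hgdvd r₁) (hgdvd r₂)] at h
    exact eq_of_bmod_mul_eq_of_div_eq hN k h.1 h.2
  have hF : (0 : ℤ) ≤ F := Int.floor_nonneg.2 (div_nonneg hx hgR.le)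
  calc (#{r ∈ range N | |((k * (r : ℕ)).bmod N : ℝ)| < x} : ℝ)
      ≤ g * (2 * F + 1) := by
        rw [card_product, card_range, Int.card_Icc, sub_neg_eq_add] at hcard
        have h2F : (((F + 1 + F).toNat : ℕ) : ℝ) = 2 * F + 1 := by
          rw [← Int.cast_natCast, Int.toNat_of_nonneg (by omega)]; push_cast; ring
        calc _ ≤ ((g * (F + 1 + F).toNat : ℕ) : ℝ) := by exact_mod_cast hcard
          _ = _ := by push_cast [h2F]; ring
    _ ≤ g * (2 * (x / g) + 1) := by gcongr; exact Int.floor_le _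
    _ = 2 * x + g := by field_simp

theorem abs_bmod_lt_of_cos_lt {N : ℕ} (hN : 0 < N) (a : ℤ) {ε : ℝ} (hε : 0 ≤ ε)
    (hε' : ε ≤ 1 / 2) (h : cos (2 * π * ε) < cos (2 * π * a / N)) :
    |(a.bmod N : ℝ)| < ε * N := by
  set b := a.bmod N
  have hNR : (0 : ℝ) < N := by exact_mod_cast hN
  obtain ⟨q, hq⟩ := Int.dvd_self_sub_bmod (x := a) (m := N)
  have hb : 2 * |(b : ℝ)| ≤ N := by
    have := Int.le_bmod (x := a) hN
    have := Int.bmod_le (x := a) hN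
    have h2b : |((2 * b : ℤ) : ℝ)| ≤ N := by exact_mod_cast abs_le.2 ⟨by omega, by omega⟩
    rwa [Int.cast_mul, abs_mul, Int.cast_two, abs_two] at h2b
  have hcos : cos (2 * π * a / N) = cos (2 * π * |(b : ℝ)| / N) := by
    have ha : (a : ℝ) = b + N * q := by exact_mod_cast (sub_eq_iff_eq_add'.1 hq)
    rw [ha, show 2 * π * (b + N * q) / N = 2 * π * b / N + q * (2 * π) by field_simp,
      cos_add_int_mul_two_pi, ← cos_abs, abs_div, abs_mul, abs_of_pos two_pi_pos,
      abs_of_pos hNR]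
  rw [hcos] at h
  have hlt := (strictAntiOn_cos.lt_iff_gt ⟨by positivity, by nlinarith [pi_pos]⟩
    ⟨by positivity, ?_⟩).1 h
  · rw [div_lt_iff₀ hNR] at hlt
    nlinarith [pi_pos]
  · rw [div_le_iff₀ hNR]
    nlinarith [pi_pos]

theorem card_filter_cos_lt_cos_le {N : ℕ} (hN : 0 < N) {k : ℤ} (hk : k ≠ 0) {ε : ℝ}
    (hε : 0 ≤ ε) (hε' : ε ≤ 1 / 2) :
    (#{r ∈ range N | cos (2 * π * ε) < cos (2 * π * k * (r : ℕ) / N)} : ℝ) ≤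
      2 * ε * N + |(k : ℝ)| := by
  have hgcd : Int.gcd N k ≤ k.natAbs := Nat.gcd_le_right _ (Int.natAbs_pos.2 hk)
  calc (#{r ∈ range N | cos (2 * π * ε) < cos (2 * π * k * (r : ℕ) / N)} : ℝ)
      ≤ #{r ∈ range N | |((k * (r : ℕ)).bmod N : ℝ)| < ε * N} := by
        refine Nat.cast_le.2 (card_le_card fun r hr ↦ ?_)
        rw [mem_filter] at hr ⊢
        refine ⟨hr.1, abs_bmod_lt_of_cos_lt hN _ hε hε' ?_⟩
        simpa [mul_assoc] using hr.2
    _ ≤ 2 * (ε * N) + Int.gcd N k := card_filter_abs_bmod_mul_lt_le hN k (by positivity)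
    _ ≤ 2 * ε * N + |(k : ℝ)| := by
        rw [← mul_assoc, ← Int.cast_abs, ← Nat.cast_natAbs]
        gcongr

theorem card_filter_one_sub_cos_lt_le {M : ℕ} (hM : 0 < M) (hMe : Even M) {k : ℤ} (hk : k ≠ 0)
    {ε : ℝ} (hε : 0 ≤ ε) (hε' : ε ≤ 1 / 2) (hkε : |(k : ℝ)| ≤ ε * M) :
    (#{r ∈ range (M / 2) | 1 - cos (4 * π * k * (r : ℕ) / M) < 1 - cos (2 * π * ε)} : ℝ)
      ≤ 2 * ε * M := by
  obtain ⟨N, rfl⟩ := hMe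
  have hN : N + N = 2 * N := by ring
  rw [hN, Nat.mul_div_cancel_left _ two_pos]
  calc (#{r ∈ range N | 1 - cos (4 * π * k * (r : ℕ) / (2 * N : ℕ)) <
        1 - cos (2 * π * ε)} : ℝ)
      = #{r ∈ range N | cos (2 * π * ε) < cos (2 * π * k * (r : ℕ) / N)} := by
        congr 2
        refine filter_congr fun r _ ↦ ?_
        rw [sub_lt_sub_iff_left, show 4 * π * k * (r : ℕ) / (2 * N : ℕ) = 2 * π * k * r / N by
          push_cast; field_simp; ring]
    _ ≤ 2 * ε * N + |(k : ℝ)| := card_filter_cos_lt_cos_le (by omega) hk hε hε'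
    _ ≤ 2 * ε * (2 * N : ℕ) := by push_cast at hkε ⊢; linarith

theorem le_card_Icc_div_four_div_two_sub_one {M : ℕ} (hMe : Even M) :
    (M : ℝ) / 4 ≤ #(Icc (M / 4) (M / 2 - 1)) := by
  obtain ⟨N, rfl⟩ := hMe
  have hcard : N - (N + N) / 4 ≤ #(Icc ((N + N) / 4) ((N + N) / 2 - 1)) := by
    rw [Nat.card_Icc]; omega
  have hdiv : (((N + N) / 4 : ℕ) : ℝ) ≤ ((N + N : ℕ) : ℝ) / 4 := Nat.cast_div_le
  calc ((N + N : ℕ) : ℝ) / 4 ≤ ((N - (N + N) / 4 : ℕ) : ℝ) := by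
        rw [Nat.cast_sub (by omega)]; push_cast at hdiv ⊢; linarith
    _ ≤ _ := by exact_mod_cast hcard

theorem stmt10_general (h M : ℕ) (hM : 0 < M) (hMe : Even M)
    (ε : ℝ) (hε1 : 0 < ε) (hε2 : ε < 1 / (8 * h))
    (k : Fin h → ℤ)
    (hk : ∀ u, -(M : ℤ) / 2 ≤ k u ∧ k u < (M : ℤ) / 2 ∧ |(k u : ℝ)| ≤ ε * M ∧ k u ≠ 0) :
    (M : ℝ) / 4 * ((1 - 8 * ε * h) * (1 - Real.cos (2 * Real.pi * ε)) ^ h) ≤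
      ∑ r ∈ Finset.Icc (M / 4) (M / 2 - 1),
        ∏ u, (1 - Real.cos (4 * Real.pi * (k u) * (r : ℝ) / M)) := by
  have hh : (1 : ℝ) ≤ h := by
    rcases Nat.eq_zero_or_pos h with rfl | hpos
    · norm_num at hε2; linarith
    · exact_mod_cast hpos
  have hεh : 8 * ε * h < 1 := by
    rw [lt_div_iff₀ (by positivity)] at hε2; linarith
  have hIcc : Icc (M / 4) (M / 2 - 1) ⊆ range (M / 2) := fun r hr ↦ by
    rw [mem_Icc] at hr; rw [mem_range]; have := hMe.two_dvd; omega
  have hbad (u : Fin h) := (Nat.cast_le.2 (card_le_card (filter_subset_filter _ hIcc))).trans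
    (card_filter_one_sub_cos_lt_le hM hMe (hk u).2.2.2 hε1.le (by nlinarith) (hk u).2.2.1)
  have hsum := card_sub_mul_pow_le_sum_prod _ (fun u (r : ℕ) ↦ 1 - cos (4 * π * k u * r / M))
    (fun _ _ _ ↦ sub_nonneg.2 (cos_le_one _)) (sub_nonneg.2 (cos_le_one _)) hbad
  rw [Fintype.card_fin] at hsum
  refine le_trans ?_ hsum
  rw [← mul_assoc]
  exact mul_le_mul_of_nonneg_right (by nlinarith [le_card_Icc_div_four_div_two_sub_one hMe])
    (pow_nonneg (sub_nonneg.2 (cos_le_one _)) _)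

/-- Lower bound for the trigonometric sum over `r ∈ {⌊M/4⌋,…,M/2-1}` of the product
`∏ᵤ (1 - cos(4πkᵤr/M))`, for `k ∈ J_M^h ∩ [-εM,εM]^h` with all components nonzero. -/
theorem stmt10 (h M : ℕ) (hh : 1 ≤ h) (hM : 0 < M) (hMe : Even M)
    (ε : ℝ) (hε1 : 0 < ε) (hε2 : ε < 1 / (8 * h))
    (k : Fin h → ℤ)
    (hk : ∀ u, -(M : ℤ) / 2 ≤ k u ∧ k u < (M : ℤ) / 2 ∧ |(k u : ℝ)| ≤ ε * M ∧ k u ≠ 0) :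
    (M : ℝ) / 4 * ((1 - 8 * ε * h) * (1 - Real.cos (2 * Real.pi * ε)) ^ h) ≤
      ∑ r ∈ Finset.Icc (M / 4) (M / 2 - 1),
        ∏ u, (1 - Real.cos (4 * Real.pi * (k u) * (r : ℝ) / M)) :=
  stmt10_general h M hM hMe ε hε1 hε2 k hk
end

section
/- Let p be a positive integer and for x₁,...,x_{d-1} > 0 define the box R_{(x₁,...,x_{d-1})} = [-x₁,x₁]×⋯×[-x_{d-1},x_{d-1}]×[-p/(x₁⋯x_{d-1}), p/(x₁⋯x_{d-1})] ⊂ ℝ^d. Then for every k ∈ ℤ^d, the iterated integral ∫₁^p ∫₁^{p/x₁} ⋯ ∫₁^{p/(x₁⋯x_{d-2})} χ_{R_{(x₁,...,x_{d-1})}}(k) dx_{d-1}/x_{d-1} ⋯ dx₁/x₁ equals (1/(d-1)!)·(log₊(p/(max(1,|k₁|)⋯max(1,|k_d|))))^{d-1}. -/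
/-!
Membership `k ∈ R_x` says `max 1 |kᵢ| ≤ xᵢ` for `i < d - 1` and `∏ xᵢ ≤ p / max 1 |k_d|`, so the
integral is that of `∏ xᵢ⁻¹` over a region `{x ≥ a, ∏ xᵢ ≤ M}`. Integrating out the first
coordinate `t` leaves the same kind of region in one dimension less, with `M / t` in place of `M`;
by induction what remains is `∫ₐ^C t⁻¹ log (C / t)ⁿ dt = log (C / a)ⁿ⁺¹ / (n + 1)`.
-/

open MeasureTheory Set Real

theorem integral_Icc_inv_mul_log_div_pow {a : ℝ} (ha : 0 < a) (C : ℝ) (n : ℕ) :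
    ∫ t in Icc a C, t⁻¹ * log (C / t) ^ n =
      if a ≤ C then log (C / a) ^ (n + 1) / (n + 1) else 0 := by
  split_ifs with haC
  · have hC : 0 < C := ha.trans_le haC
    have hpos : ∀ t ∈ uIcc a C, 0 < t := fun t ht => ha.trans_le (uIcc_of_le haC ▸ ht).1
    have hderiv : ∀ t ∈ uIcc a C, HasDerivAt (fun s => -log (C / s) ^ (n + 1) / (n + 1))
        (t⁻¹ * log (C / t) ^ n) t := by
      intro t ht
      have ht0 := hpos t ht
      have hlog := ((hasDerivAt_inv ht0.ne').const_mul C).log (div_pos hC ht0).ne'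
      simp only [← div_eq_mul_inv] at hlog
      refine ((hlog.pow (n + 1)).neg.div_const (n + 1 : ℝ)).congr_deriv ?_
      push_cast
      field_simp
    have hcont : ContinuousOn (fun t => t⁻¹ * log (C / t) ^ n) (uIcc a C) := fun t ht => by
      have ht0 : t ≠ 0 := (hpos t ht).ne'
      have hCt : C / t ≠ 0 := (div_pos hC (hpos t ht)).ne'
      exact ContinuousAt.continuousWithinAt (by fun_prop (disch := simp [*]))
    rw [integral_Icc_eq_integral_Ioc, ← intervalIntegral.integral_of_le haC,
      intervalIntegral.integral_eq_sub_of_hasDerivAt hderiv hcont.intervalIntegrable]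
    simp [div_self hC.ne', neg_div]
  · rw [Icc_eq_empty haC, Measure.restrict_empty, integral_zero_measure]

section
variable {ι : Type*} [Fintype ι]

def hyperbolicRegion (a : ι → ℝ) (M : ℝ) : Set (ι → ℝ) :=
  {x | (∀ i, a i ≤ x i) ∧ ∏ i, x i ≤ M}

theorem measurableSet_hyperbolicRegion (a : ι → ℝ) (M : ℝ) :
    MeasurableSet (hyperbolicRegion a M) := by
  unfold hyperbolicRegion
  measurability

theorem hyperbolicRegion_subset_Icc [DecidableEq ι] {a : ι → ℝ} (ha : ∀ i, 0 < a i) (M : ℝ) :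
    hyperbolicRegion a M ⊆ Icc a fun i => M / ∏ j ∈ Finset.univ.erase i, a j := by
  rintro x ⟨hax, hxM⟩
  refine ⟨hax, fun i => ?_⟩
  have hx : 0 < x i := (ha i).trans_le (hax i)
  rw [le_div_iff₀ (Finset.prod_pos fun j _ => ha j)]
  calc x i * ∏ j ∈ Finset.univ.erase i, a j ≤ x i * ∏ j ∈ Finset.univ.erase i, x j := by
        gcongr with j
        exacts [fun j _ => (ha j).le, hax j]
    _ = ∏ j, x j := Finset.mul_prod_erase _ _ (Finset.mem_univ i)
    _ ≤ M := hxM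

theorem integrableOn_hyperbolicRegion {a : ι → ℝ} (ha : ∀ i, 0 < a i) (M : ℝ) :
    IntegrableOn (fun x => ∏ i, (x i)⁻¹) (hyperbolicRegion a M) := by
  classical
  have hmeas : Measurable fun x : ι → ℝ => ∏ i, (x i)⁻¹ := by fun_prop
  refine Measure.integrableOn_of_bounded (M := ∏ i, (a i)⁻¹) ?_ hmeas.aestronglyMeasurable ?_
  · exact ((Metric.isBounded_Icc _ _).subset (hyperbolicRegion_subset_Icc ha M)).measure_lt_top.ne
  · refine (ae_restrict_iff' (measurableSet_hyperbolicRegion a M)).2 (ae_of_all _ ?_)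
    rintro x ⟨hax, -⟩
    have hx i : 0 ≤ (x i)⁻¹ := inv_nonneg.2 ((ha i).le.trans (hax i))
    rw [Real.norm_of_nonneg (Finset.prod_nonneg fun i _ => hx i)]
    gcongr with i
    exacts [fun i _ => hx i, ha i, hax i]

theorem hyperbolicRegion_max_one_abs (c : ι → ℝ) (c' p : ℝ) :
    hyperbolicRegion (fun i => max 1 |c i|) (p / max 1 |c'|) =
      {x | (∀ i, 1 ≤ x i) ∧ ∏ i, x i ≤ p ∧ (∀ i, |c i| ≤ x i) ∧ |c'| * ∏ i, x i ≤ p} := by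
  ext x
  simp only [hyperbolicRegion, mem_ofPred_eq, max_le_iff, forall_and,
    le_div_iff₀ (one_pos.trans_le (le_max_left 1 |c'|))]
  by_cases h1 : ∀ i, 1 ≤ x i
  · have hx : 0 ≤ ∏ i, x i := Finset.prod_nonneg fun i _ => zero_le_one.trans (h1 i)
    rw [mul_max_of_nonneg _ _ hx, max_le_iff, mul_one, mul_comm (∏ i, x i)]
    tauto
  · simp [h1]

end

theorem cons_mem_hyperbolicRegion_iff {n : ℕ} {a : Fin (n + 1) → ℝ} (ha : 0 < a 0) {M t : ℝ}
    {y : Fin n → ℝ} :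
    (Fin.cons t y : Fin (n + 1) → ℝ) ∈ hyperbolicRegion a M ↔
      a 0 ≤ t ∧ y ∈ hyperbolicRegion (Fin.tail a) (M / t) := by
  simp only [hyperbolicRegion, mem_ofPred_eq, Fin.forall_fin_succ, Fin.cons_zero, Fin.cons_succ,
    Fin.prod_univ_succ, Fin.tail, and_assoc]
  refine and_congr_right fun hat => and_congr_right fun _ => ?_
  rw [le_div_iff₀ (ha.trans_le hat), mul_comm]

theorem integral_eq_integral_integral_cons {E : Type*} [NormedAddCommGroup E] [NormedSpace ℝ E]
    {n : ℕ} {f : (Fin (n + 1) → ℝ) → E} (hf : Integrable f) :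
    ∫ x, f x = ∫ t, ∫ y, f (Fin.cons t y) := by
  have he := (volume_preserving_piFinSuccAbove (fun _ : Fin (n + 1) => ℝ) 0).symm
  rw [← he.integral_comp (MeasurableEquiv.measurableEmbedding _), Measure.volume_eq_prod,
    integral_prod]
  · simp [MeasurableEquiv.piFinSuccAbove_symm_apply, Fin.insertNthEquiv]
  · exact (he.integrable_comp_emb (MeasurableEquiv.measurableEmbedding _)).2 hf

theorem setIntegral_hyperbolicRegion_succ {n : ℕ} {a : Fin (n + 1) → ℝ} (ha : ∀ i, 0 < a i)
    (M : ℝ) :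
    ∫ x in hyperbolicRegion a M, ∏ i, (x i)⁻¹ =
      ∫ t in Ici (a 0), t⁻¹ * ∫ y in hyperbolicRegion (Fin.tail a) (M / t), ∏ i, (y i)⁻¹ := by
  rw [← integral_indicator (measurableSet_hyperbolicRegion a M),
    integral_eq_integral_integral_cons
      ((integrableOn_hyperbolicRegion ha M).integrable_indicator
        (measurableSet_hyperbolicRegion a M)),
    ← integral_indicator measurableSet_Ici]
  congr 1 with t
  by_cases hat : a 0 ≤ t
  · rw [indicator_of_mem (mem_Ici.2 hat), ← integral_const_mul,
      ← integral_indicator (measurableSet_hyperbolicRegion _ _)]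
    congr 1 with y
    classical
    simp only [indicator_apply, cons_mem_hyperbolicRegion_iff (ha 0), hat, true_and,
      Fin.prod_univ_succ, Fin.cons_zero, Fin.cons_succ]
  · have hy y : (Fin.cons t y : Fin (n + 1) → ℝ) ∉ hyperbolicRegion a M := fun h =>
      hat ((cons_mem_hyperbolicRegion_iff (ha 0)).1 h).1
    simp [indicator_of_notMem (notMem_Ici.2 (not_le.1 hat)), indicator_of_notMem (hy _)]

/-- The `if` form, rather than `max (log (M / ∏ i, a i)) 0 ^ n`, is what makes `n = 0` true. -/
theorem setIntegral_hyperbolicRegion (n : ℕ) (a : Fin n → ℝ) (ha : ∀ i, 0 < a i) (M : ℝ) :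
    ∫ x in hyperbolicRegion a M, ∏ i, (x i)⁻¹ =
      (if ∏ i, a i ≤ M then log (M / ∏ i, a i) ^ n else 0) / n.factorial := by
  induction n generalizing M with
  | zero =>
    by_cases hM : 1 ≤ M <;> simp [hyperbolicRegion, hM, volume_pi, Measure.pi_of_empty _ 0]
  | succ n ih =>
    set A := ∏ i : Fin n, a i.succ with hA_def
    have hA : 0 < A := Finset.prod_pos fun i _ => ha i.succ
    have hslice : ∀ t ∈ Ici (a 0),
        t⁻¹ * ∫ y in hyperbolicRegion (Fin.tail a) (M / t), ∏ i, (y i)⁻¹ =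
          (Iic (M / A)).indicator
            (fun t => (n.factorial : ℝ)⁻¹ * (t⁻¹ * log (M / A / t) ^ n)) t := by
      intro t ht
      have ht0 : 0 < t := (ha 0).trans_le ht
      classical
      rw [ih (Fin.tail a) (fun i => ha i.succ), indicator_apply]
      simp only [Fin.tail, ← hA_def, mem_Iic, le_div_iff₀ ht0, le_div_iff₀ hA, mul_comm t A,
        div_right_comm M t A]
      split_ifs <;> ring
    rw [setIntegral_hyperbolicRegion_succ ha, setIntegral_congr_fun measurableSet_Ici hslice,
      setIntegral_indicator measurableSet_Iic, Ici_inter_Iic, integral_const_mul,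
      integral_Icc_inv_mul_log_div_pow (ha 0), Fin.prod_univ_succ]
    simp only [← hA_def, le_div_iff₀ hA, div_div, mul_comm A]
    split_ifs
    · rw [Nat.factorial_succ]
      push_cast
      field_simp
    · simp

theorem max_log_div_zero_pow {A M : ℝ} (hA : 0 < A) (hM : 0 ≤ M) {n : ℕ} (hn : n ≠ 0) :
    max (log (M / A)) 0 ^ n = if A ≤ M then log (M / A) ^ n else 0 := by
  split_ifs with h
  · rw [max_eq_left (log_nonneg ((one_le_div hA).2 h))]
  · rw [max_eq_right (log_nonpos (div_nonneg hM hA.le) ((div_le_one hA).2 (not_le.1 h).le)),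
      zero_pow hn]

/-- The iterated integral `∫₁^p ⋯ ∫₁^{p/(x₁⋯x_{d-2})} χ_{R_{(x₁,…,x_{d-1})}}(k)
dx_{d-1}/x_{d-1} ⋯ dx₁/x₁` equals
`(1/(d-1)!)·(log₊(p/(max(1,|k₁|)⋯max(1,|k_d|))))^{d-1}`. The iterated integral is
written as an integral over the region
`{x ∈ [1,∞)^{d-1} : ∏ xᵢ ≤ p}` of `χ_R(k)·∏ xᵢ⁻¹`. -/
theorem stmt13 (d p : ℕ) (hd : 2 ≤ d) (k : Fin d → ℤ) :
    (∫ x : Fin (d - 1) → ℝ,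
      Set.indicator
        {x : Fin (d - 1) → ℝ |
          (∀ i, 1 ≤ x i) ∧ (∏ i, x i) ≤ (p : ℝ) ∧
          (∀ i : Fin (d - 1), |(k (Fin.castLE (Nat.sub_le d 1) i) : ℝ)| ≤ x i) ∧
          |(k ⟨d - 1, by omega⟩ : ℝ)| * ∏ i, x i ≤ (p : ℝ)}
        (fun x => ∏ i, (x i)⁻¹) x)
    = (1 / ((d - 1).factorial : ℝ)) *
        (max (Real.log ((p : ℝ) / ∏ u, max 1 |(k u : ℝ)|)) 0) ^ (d - 1) := by
  obtain ⟨n, rfl⟩ : ∃ n, d = n + 1 := ⟨d - 1, by omega⟩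
  have hprod : ∏ u, max 1 |(k u : ℝ)| =
      max 1 |(k ⟨n + 1 - 1, by omega⟩ : ℝ)| *
        ∏ i : Fin (n + 1 - 1), max 1 |(k (Fin.castLE (Nat.sub_le (n + 1) 1) i) : ℝ)| := by
    rw [Fin.prod_univ_castSucc, mul_comm]
    rfl
  rw [← hyperbolicRegion_max_one_abs, integral_indicator (measurableSet_hyperbolicRegion _ _),
    setIntegral_hyperbolicRegion _ _ (fun i => one_pos.trans_le (le_max_left _ _)), hprod,
    ← div_div, max_log_div_zero_pow (Finset.prod_pos fun i _ => one_pos.trans_le (le_max_left _ _))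
      (by positivity) (by omega), one_div_mul_eq_div]
end

section
/- Let d ≢ 1 (mod 4). There exists ε₀ > 0 and c₀ > 0 such that for all real r > 0, all even M, and all k ∈ ℤ^d with 0 < |k| < M/(10√d), setting ω₁ = (2πr + 2π√d/M)|k| − (d+1)π/4 and ω₂ = (4πr + 2π√d/M)|k| − (d+1)π/4, one has cos²(ω₁) + cos²(ω₂) ≥ c₀. In particular it is impossible that both |ω₁ − (π/2 + ℓπ)| ≤ ε₀ and |ω₂ − (π/2 + hπ)| ≤ ε₀ for some integers ℓ, h. -/
/-!
Write `t = 2π√d|k|/M`. The two phases satisfy `ω₂ = 2ω₁ - t + (d+1)π/4`. If both were within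
`ε` of odd multiples of `π/2`, say `π/2 + ℓπ` and `π/2 + hπ`, then `(d + 3 - 4h + 8ℓ)π/4 - t`
would be within `3ε` of `0`. Since `d ≢ 1 (mod 4)` the integer `d + 3 - 4h + 8ℓ` is nonzero,
while `0 ≤ t < π/5` because `|k| < M/(10√d)`; for `ε = π/100` this is impossible. The bound on
`cos²ω₁ + cos²ω₂` follows by Jordan's inequality, which turns a small `|cos ω|` into a small
distance from `ω` to `π/2 + πℤ`.
-/

open Real

lemma exists_int_abs_sub_mul_le (x : ℝ) {p : ℝ} (hp : 0 < p) :
    ∃ n : ℤ, |x - n * p| ≤ p / 2 := by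
  refine ⟨round (x / p), ?_⟩
  have h : x - round (x / p) * p = (x / p - round (x / p)) * p := by field_simp
  rw [h, abs_mul, abs_of_pos hp]
  nlinarith [abs_sub_round (x / p)]

lemma cos_sq_odd_half_pi_add (n : ℤ) (δ : ℝ) : cos (π / 2 + n * π + δ) ^ 2 = sin δ ^ 2 := by
  rw [show π / 2 + n * π + δ = δ + π / 2 + n * π by ring, cos_add_int_mul_pi, cos_add_pi_div_two,
    mul_pow, neg_sq, ← zpow_natCast, ← zpow_mul, mul_comm n, zpow_mul]
  norm_num

lemma exists_abs_sub_le_of_cos_sq_lt {ω ε : ℝ} (hε : 0 ≤ ε) (h : cos ω ^ 2 < (2 * ε / π) ^ 2) :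
    ∃ n : ℤ, |ω - (π / 2 + n * π)| ≤ ε := by
  obtain ⟨n, hn⟩ := exists_int_abs_sub_mul_le (ω - π / 2) pi_pos
  refine ⟨n, ?_⟩
  set δ := ω - (π / 2 + n * π) with hδ
  have hcos : cos ω ^ 2 = |sin δ| ^ 2 := by
    rw [show ω = π / 2 + n * π + δ by rw [hδ]; ring, cos_sq_odd_half_pi_add, sq_abs]
  have hjordan : 2 / π * |δ| ≤ |sin δ| := mul_abs_le_abs_sin (by rwa [hδ, ← sub_sub])
  have hsq : (2 / π * |δ|) ^ 2 < (2 * ε / π) ^ 2 :=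
    calc (2 / π * |δ|) ^ 2 ≤ |sin δ| ^ 2 := by gcongr
      _ = cos ω ^ 2 := hcos.symm
      _ < _ := h
  have hlt := (pow_lt_pow_iff_left₀ (by positivity) (by positivity) two_ne_zero).mp hsq
  rw [div_mul_eq_mul_div, div_lt_div_iff_of_pos_right pi_pos] at hlt
  linarith

lemma lt_abs_int_mul_pi_div_four_sub {m : ℤ} (hm : m ≠ 0) {t δ : ℝ} (ht : 0 ≤ t)
    (hδ : δ + t < π / 4) : δ < |m * π / 4 - t| := by
  have := pi_pos
  rcases hm.lt_or_gt with hneg | hpos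
  · have : (m : ℝ) ≤ -1 := by exact_mod_cast Int.le_sub_one_of_lt hneg
    calc δ < π / 4 := by linarith
      _ ≤ -(m * π / 4 - t) := by nlinarith
      _ ≤ _ := neg_le_abs _
  · have : (1 : ℝ) ≤ m := by exact_mod_cast hpos
    calc δ < π / 4 - t := by linarith
      _ ≤ m * π / 4 - t := by nlinarith
      _ ≤ _ := le_abs_self _

lemma not_abs_sub_odd_half_pi_le_and {d : ℕ} (hd : d % 4 ≠ 1) {ω₁ ω₂ t ε : ℝ}
    (hω : ω₂ = 2 * ω₁ - t + (d + 1) * π / 4) (ht : 0 ≤ t) (hε : 3 * ε + t < π / 4) (ℓ h : ℤ) :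
    ¬ (|ω₁ - (π / 2 + ℓ * π)| ≤ ε ∧ |ω₂ - (π / 2 + h * π)| ≤ ε) := by
  rintro ⟨hℓ, hh⟩
  set m : ℤ := d + 3 - 4 * h + 8 * ℓ
  have hm : m ≠ 0 := by omega
  have hsplit : (m : ℝ) * π / 4 - t = (ω₂ - (π / 2 + h * π)) - 2 * (ω₁ - (π / 2 + ℓ * π)) := by
    simp only [m, hω]
    push_cast
    ring
  have hle : |(m : ℝ) * π / 4 - t| ≤ 3 * ε := by
    rw [hsplit]
    calc _ ≤ |ω₂ - (π / 2 + h * π)| + |2 * (ω₁ - (π / 2 + ℓ * π))| := abs_sub _ _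
      _ ≤ 3 * ε := by rw [abs_mul, abs_two]; linarith
  exact hle.not_gt (lt_abs_int_mul_pi_div_four_sub hm ht hε)

lemma two_pi_mul_div_mul_lt {x s M : ℝ} (hx : 0 ≤ x) (hs : 0 < s) (hsM : s < M / (10 * x)) :
    2 * π * x / M * s < π / 5 := by
  obtain ⟨hM, hx0⟩ := (div_pos_iff.mp (hs.trans hsM)).resolve_right fun h ↦ by linarith [h.2]
  have : s * (10 * x) < M := (lt_div_iff₀ hx0).mp hsM
  rw [div_mul_eq_mul_div, div_lt_iff₀ hM]
  nlinarith [pi_pos]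

theorem stmt18_general (d : ℕ) (hd4 : d % 4 ≠ 1) :
    ∃ ε₀ c₀ : ℝ, 0 < ε₀ ∧ 0 < c₀ ∧
      ∀ (r : ℝ) (M : ℕ) (k : Fin d → ℤ), 0 < r → Even M →
        0 < Real.sqrt (∑ i, (k i : ℝ) ^ 2) →
        Real.sqrt (∑ i, (k i : ℝ) ^ 2) < (M : ℝ) / (10 * Real.sqrt d) →
        (c₀ ≤
            Real.cos ((2 * Real.pi * r + 2 * Real.pi * Real.sqrt d / M) *
                Real.sqrt (∑ i, (k i : ℝ) ^ 2) - (d + 1) * Real.pi / 4) ^ 2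
            + Real.cos ((4 * Real.pi * r + 2 * Real.pi * Real.sqrt d / M) *
                Real.sqrt (∑ i, (k i : ℝ) ^ 2) - (d + 1) * Real.pi / 4) ^ 2)
        ∧ ¬ ∃ ℓ h : ℤ,
            |(2 * Real.pi * r + 2 * Real.pi * Real.sqrt d / M) *
                Real.sqrt (∑ i, (k i : ℝ) ^ 2) - (d + 1) * Real.pi / 4
              - (Real.pi / 2 + ℓ * Real.pi)| ≤ ε₀ ∧
            |(4 * Real.pi * r + 2 * Real.pi * Real.sqrt d / M) *
                Real.sqrt (∑ i, (k i : ℝ) ^ 2) - (d + 1) * Real.pi / 4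
              - (Real.pi / 2 + h * Real.pi)| ≤ ε₀ := by
  refine ⟨π / 100, (2 * (π / 100) / π) ^ 2, by positivity, by positivity, ?_⟩
  intro r M k _ _ hs hsM
  set s := √(∑ i, (k i : ℝ) ^ 2)
  have ht0 : 0 ≤ 2 * π * √d / M * s := by positivity
  have ht : 2 * π * √d / M * s < π / 5 := two_pi_mul_div_mul_lt (sqrt_nonneg _) hs hsM
  set ω₁ := (2 * π * r + 2 * π * √d / M) * s - (d + 1) * π / 4
  set ω₂ := (4 * π * r + 2 * π * √d / M) * s - (d + 1) * π / 4
  have hω : ω₂ = 2 * ω₁ - 2 * π * √d / M * s + (d + 1) * π / 4 := by simp only [ω₁, ω₂]; ring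
  have hfar : ¬ ∃ ℓ h : ℤ, |ω₁ - (π / 2 + ℓ * π)| ≤ π / 100 ∧ |ω₂ - (π / 2 + h * π)| ≤ π / 100 :=
    fun ⟨ℓ, h, hboth⟩ ↦ not_abs_sub_odd_half_pi_le_and hd4 hω ht0 (by linarith [pi_pos]) ℓ h hboth
  refine ⟨?_, hfar⟩
  by_contra! hsum
  obtain ⟨ℓ, hℓ⟩ := exists_abs_sub_le_of_cos_sq_lt (ω := ω₁) (ε := π / 100)
    (by positivity) (by nlinarith [sq_nonneg (cos ω₂)])
  obtain ⟨h, hh⟩ := exists_abs_sub_le_of_cos_sq_lt (ω := ω₂) (ε := π / 100)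
    (by positivity) (by nlinarith [sq_nonneg (cos ω₁)])
  exact hfar ⟨ℓ, h, hℓ, hh⟩

/-- The two-radii trick: for `d ≢ 1 (mod 4)` there are `ε₀, c₀ > 0` such that for
all `r > 0`, even `M`, and `k ∈ ℤ^d` with `0 < |k| < M/(10√d)`, setting
`ω₁ = (2πr + 2π√d/M)|k| − (d+1)π/4` and `ω₂ = (4πr + 2π√d/M)|k| − (d+1)π/4`,
one has `cos²ω₁ + cos²ω₂ ≥ c₀`; in particular `ω₁, ω₂` cannot both be within
`ε₀` of `π/2` modulo `π`. -/
theorem stmt18 (d : ℕ) (hd : 0 < d) (hd4 : d % 4 ≠ 1) :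
    ∃ ε₀ c₀ : ℝ, 0 < ε₀ ∧ 0 < c₀ ∧
      ∀ (r : ℝ) (M : ℕ) (k : Fin d → ℤ), 0 < r → Even M →
        0 < Real.sqrt (∑ i, (k i : ℝ) ^ 2) →
        Real.sqrt (∑ i, (k i : ℝ) ^ 2) < (M : ℝ) / (10 * Real.sqrt d) →
        (c₀ ≤
            Real.cos ((2 * Real.pi * r + 2 * Real.pi * Real.sqrt d / M) *
                Real.sqrt (∑ i, (k i : ℝ) ^ 2) - (d + 1) * Real.pi / 4) ^ 2
            + Real.cos ((4 * Real.pi * r + 2 * Real.pi * Real.sqrt d / M) *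
                Real.sqrt (∑ i, (k i : ℝ) ^ 2) - (d + 1) * Real.pi / 4) ^ 2)
        ∧ ¬ ∃ ℓ h : ℤ,
            |(2 * Real.pi * r + 2 * Real.pi * Real.sqrt d / M) *
                Real.sqrt (∑ i, (k i : ℝ) ^ 2) - (d + 1) * Real.pi / 4
              - (Real.pi / 2 + ℓ * Real.pi)| ≤ ε₀ ∧
            |(4 * Real.pi * r + 2 * Real.pi * Real.sqrt d / M) *
                Real.sqrt (∑ i, (k i : ℝ) ^ 2) - (d + 1) * Real.pi / 4
              - (Real.pi / 2 + h * Real.pi)| ≤ ε₀ :=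
  stmt18_general d hd4
end
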